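/- arXiv:0706.3608 — 3 statements merged into one kernel-verified Lean document; each statement's English description precedes it below -/
import Mathlib

section
/- Conversely, if f is holomorphic on a connected open set with f' nonvanishing and S(f) = 0 identically, then f is the restriction of a Möbius transformation, i.e. f(z) = (az+b)/(cz+d) for some a,b,c,d ∈ ℂ with ad-bc ≠ 0. -/
/-!
Write `q = f''/f'`, so that `S(f) = 0` is the Riccati equation `q' = q²/2`. For an affine map
`φ = c z + d` put `r = φ q + 2c`; then `r' = (q/2) r` and `(f')' = q f'`, so `r²/f'` is constant.
Choosing `φ` with `r(z₀) = 0` forces `r ≡ 0`, i.e. `φ f'' + 2c f' = 0`, which says that `f' φ²` is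
a nonzero constant `A`. Since `(a z + b)/(c z + d)` has derivative `(a d - b c)/(c z + d)²`, `f`
is then a Möbius map of determinant `A`.
-/

noncomputable def schwarzian (f : ℂ → ℂ) : ℂ → ℂ :=
  fun z => deriv (fun w => deriv (deriv f) w / deriv f w) z
    - (1/2) * (deriv (deriv f) z / deriv f z)^2

section

variable {𝕜 : Type*}

theorem hasDerivAt_moebius [NontriviallyNormedField 𝕜] (a b c d : 𝕜) {z : 𝕜}
    (hz : c * z + d ≠ 0) :
    HasDerivAt (fun w => (a * w + b) / (c * w + d)) ((a * d - b * c) / (c * z + d) ^ 2) z := by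
  refine ((((hasDerivAt_id z).const_mul a).add_const b).fun_div
    (((hasDerivAt_id z).const_mul c).add_const d) hz).congr_deriv ?_
  simp only [id, mul_one]
  ring

theorem IsOpen.eq_of_forall_hasDerivAt_zero [RCLike 𝕜] {U : Set 𝕜} (hU : IsOpen U)
    (hUc : IsPreconnected U) {g : 𝕜 → 𝕜} (hg : ∀ z ∈ U, HasDerivAt g 0 z) {x y : 𝕜}
    (hx : x ∈ U) (hy : y ∈ U) : g x = g y :=
  hU.is_const_of_deriv_eq_zero hUc (fun z hz => (hg z hz).differentiableAt.differentiableWithinAt)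
    (fun z hz => (hg z hz).deriv) hx hy

theorem hasDerivAt_sq_div_of_riccati [RCLike 𝕜] {F q : 𝕜 → 𝕜} {z : 𝕜} (c d : 𝕜)
    (hF : HasDerivAt F (q z * F z) z) (hq : HasDerivAt q (1 / 2 * q z ^ 2) z) (hFz : F z ≠ 0) :
    HasDerivAt (fun w => ((c * w + d) * q w + 2 * c) ^ 2 / F w) 0 z := by
  have hφ : HasDerivAt (fun w => c * w + d) c z := by
    simpa using ((hasDerivAt_id z).const_mul c).add_const d
  have hr : HasDerivAt (fun w => (c * w + d) * q w + 2 * c)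
      (q z / 2 * ((c * z + d) * q z + 2 * c)) z :=
    ((hφ.fun_mul hq).add_const (2 * c)).congr_deriv (by ring)
  refine ((hr.fun_pow 2).fun_div hF hFz).congr_deriv ?_
  field_simp
  ring

theorem hasDerivAt_mul_sq_of_riccati [NontriviallyNormedField 𝕜] {F q : 𝕜 → 𝕜} {z c d : 𝕜}
    (hF : HasDerivAt F (q z * F z) z) (hr : (c * z + d) * q z + 2 * c = 0) :
    HasDerivAt (fun w => F w * (c * w + d) ^ 2) 0 z := by
  have hφ : HasDerivAt (fun w => c * w + d) c z := by
    simpa using ((hasDerivAt_id z).const_mul c).add_const d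
  refine (hF.fun_mul (hφ.fun_pow 2)).congr_deriv ?_
  linear_combination F z * (c * z + d) * hr

theorem mul_sq_eq_of_riccati [RCLike 𝕜] {U : Set 𝕜} (hU : IsOpen U) (hUc : IsPreconnected U)
    {F q : 𝕜 → 𝕜} (hF : ∀ z ∈ U, HasDerivAt F (q z * F z) z)
    (hq : ∀ z ∈ U, HasDerivAt q (1 / 2 * q z ^ 2) z) (hF0 : ∀ z ∈ U, F z ≠ 0) {z₀ c d : 𝕜}
    (hz₀ : z₀ ∈ U) (hr₀ : (c * z₀ + d) * q z₀ + 2 * c = 0) {z : 𝕜} (hz : z ∈ U) :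
    F z * (c * z + d) ^ 2 = F z₀ * (c * z₀ + d) ^ 2 := by
  have hr : ∀ z ∈ U, (c * z + d) * q z + 2 * c = 0 := fun z hz => by
    have := hU.eq_of_forall_hasDerivAt_zero hUc
      (fun w hw => hasDerivAt_sq_div_of_riccati c d (hF w hw) (hq w hw) (hF0 w hw)) hz hz₀
    simpa [hr₀, hF0 z hz] using this
  exact hU.eq_of_forall_hasDerivAt_zero hUc
    (fun w hw => hasDerivAt_mul_sq_of_riccati (hF w hw) (hr w hw)) hz hz₀

theorem exists_moebius_of_deriv_mul_sq_eq [RCLike 𝕜] {U : Set 𝕜} (hU : IsOpen U)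
    (hUc : IsConnected U) {f : 𝕜 → 𝕜} (hf : DifferentiableOn 𝕜 f U) {A c d : 𝕜} (hA : A ≠ 0)
    (h : ∀ z ∈ U, deriv f z * (c * z + d) ^ 2 = A) :
    ∃ a b, a * d - b * c = A ∧ ∀ z ∈ U, c * z + d ≠ 0 ∧ f z = (a * z + b) / (c * z + d) := by
  obtain ⟨z₀, hz₀⟩ := hUc.nonempty
  have hφ : ∀ z ∈ U, c * z + d ≠ 0 := fun z hz h0 => hA (by simpa [h0] using (h z hz).symm)
  obtain ⟨a, b, hdet⟩ : ∃ a b, a * d - b * c = A :=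
    ⟨A / (c * z₀ + d), -(A * z₀ / (c * z₀ + d)), by field_simp [hφ z₀ hz₀]; ring⟩
  have hg : ∀ z ∈ U, HasDerivAt (fun w => f w - (a * w + b) / (c * w + d)) 0 z := fun z hz =>
    ((hf.differentiableAt (hU.mem_nhds hz)).hasDerivAt.sub
      (hasDerivAt_moebius a b c d (hφ z hz))).congr_deriv (by
        rw [hdet, ← h z hz]; field_simp [hφ z hz]; ring)
  set δ := f z₀ - (a * z₀ + b) / (c * z₀ + d)
  refine ⟨a + δ * c, b + δ * d, by linear_combination hdet, fun z hz => ⟨hφ z hz, ?_⟩⟩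
  have hfz : f z = (a * z + b) / (c * z + d) + δ := by
    linear_combination hU.eq_of_forall_hasDerivAt_zero hUc.isPreconnected hg hz hz₀
  rw [hfz, div_add' _ _ _ (hφ z hz)]
  ring

end

/-- If `f` is holomorphic with nonvanishing derivative on a connected open set and
`S(f) = 0` identically, then `f` is the restriction of a Möbius transformation. -/
theorem schwarzian_eq_zero_iff_moebius (U : Set ℂ) (hU : IsOpen U) (hconn : IsConnected U)
    (f : ℂ → ℂ) (hf : DifferentiableOn ℂ f U) (hf' : ∀ z ∈ U, deriv f z ≠ 0)
    (hS : ∀ z ∈ U, schwarzian f z = 0) :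
    ∃ a b c d : ℂ, a * d - b * c ≠ 0 ∧
      ∀ z ∈ U, c * z + d ≠ 0 ∧ f z = (a * z + b) / (c * z + d) := by
  obtain ⟨z₀, hz₀⟩ := hconn.nonempty
  set q := fun w => deriv (deriv f) w / deriv f w
  have hdf : AnalyticOnNhd ℂ (deriv f) U := (hf.analyticOnNhd hU).deriv
  have hF : ∀ z ∈ U, HasDerivAt (deriv f) (q z * deriv f z) z := fun z hz =>
    (hdf z hz).differentiableAt.hasDerivAt.congr_deriv (div_mul_cancel₀ _ (hf' z hz)).symm
  have hq : ∀ z ∈ U, HasDerivAt q (1 / 2 * q z ^ 2) z := fun z hz =>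
    ((hdf.deriv z hz).differentiableAt.div (hdf z hz).differentiableAt
      (hf' z hz)).hasDerivAt.congr_deriv (sub_eq_zero.mp (hS z hz))
  obtain ⟨c, d, hφ₀, hr₀⟩ : ∃ c d : ℂ, c * z₀ + d = 1 ∧ (c * z₀ + d) * q z₀ + 2 * c = 0 :=
    ⟨-q z₀ / 2, 1 + q z₀ / 2 * z₀, by ring, by ring⟩
  have hconst : ∀ z ∈ U, deriv f z * (c * z + d) ^ 2 = deriv f z₀ := fun z hz => by
    simpa [hφ₀] using mul_sq_eq_of_riccati hU hconn.isPreconnected hF hq hf' hz₀ hr₀ hz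
  obtain ⟨a, b, hdet, hmob⟩ := exists_moebius_of_deriv_mul_sq_eq hU hconn hf (hf' z₀ hz₀) hconst
  exact ⟨a, b, c, d, hdet ▸ hf' z₀ hz₀, hmob⟩
end

section
/- Two holomorphic functions f and g on a connected open set, both with nonvanishing derivative, satisfy S(f) = S(g) if and only if g = φ ∘ f for some Möbius transformation φ. -/
open Complex

/-!
If `L² g' = K f'` near a point, with `K` a nonzero constant, then `g''/g' = f''/f' - 2L'/L`, and
hence `S g = S f + 2 (L' f''/f' - L'')/L`. For `g = (af + b)/(cf + d)` take `L = cf + d` and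
`K = ad - bc`: then `L'' f' = L' f''`, so the Schwarzians agree. Conversely, if `S f = S g`, let `L`
be a local square root of `f'/g'`; now `(L'/f')' = 0`, so `L = cf + d` is affine in `f`, and
integrating `g' = f'/(cf + d)²` gives a Möbius relation near a point, which the identity theorem
propagates to all of `U`.
-/

open Filter Topology

theorem eventually_eq_of_eventually_hasDerivAt_zero {𝕜 E : Type*} [RCLike 𝕜]
    [NormedAddCommGroup E] [NormedSpace 𝕜 E] {F : 𝕜 → E} {z₀ : 𝕜}
    (hF : ∀ᶠ z in 𝓝 z₀, HasDerivAt F 0 z) : ∀ᶠ z in 𝓝 z₀, F z = F z₀ := by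
  obtain ⟨ε, hε, hball⟩ := Metric.eventually_nhds_iff_ball.mp hF
  filter_upwards [Metric.ball_mem_nhds z₀ hε] with z hz
  exact Metric.isOpen_ball.is_const_of_deriv_eq_zero (convex_ball z₀ ε).isPreconnected
    (fun w hw => (hball w hw).differentiableAt.differentiableWithinAt)
    (fun w hw => (hball w hw).deriv) hz (Metric.mem_ball_self hε)

theorem exists_analyticAt_pow_eq {F : ℂ → ℂ} {z₀ : ℂ} (hF : AnalyticAt ℂ F z₀) (h₀ : F z₀ ≠ 0)
    {n : ℕ} (hn : n ≠ 0) : ∃ L : ℂ → ℂ, AnalyticAt ℂ L z₀ ∧ ∀ z, L z ^ n = F z := by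
  -- the principal branch is analytic near `F z / F z₀ = 1`
  refine ⟨fun z => F z₀ ^ (n⁻¹ : ℂ) * (F z / F z₀) ^ (n⁻¹ : ℂ), ?_, fun z => ?_⟩
  · exact analyticAt_const.mul ((hF.div analyticAt_const h₀).cpow analyticAt_const (by simp [h₀]))
  · rw [mul_pow, cpow_nat_inv_pow _ hn, cpow_nat_inv_pow _ hn, mul_div_cancel₀ _ h₀]

theorem HasDerivAt.moebius {f : ℂ → ℂ} {f' z : ℂ} (hf : HasDerivAt f f' z) (a b : ℂ) {c d : ℂ}
    (h : c * f z + d ≠ 0) :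
    HasDerivAt (fun w => (a * f w + b) / (c * f w + d))
      ((a * d - b * c) * f' / (c * f z + d) ^ 2) z := by
  refine (((hf.const_mul a).add_const b).fun_div ((hf.const_mul c).add_const d) h).congr_deriv ?_
  ring

theorem exists_moebius_eventually_of_sq_mul_deriv_eq {F G : ℂ → ℂ} {z₀ c d K : ℂ}
    (hF : AnalyticAt ℂ F z₀) (hG : AnalyticAt ℂ G z₀) (h₀ : c * F z₀ + d ≠ 0)
    (h : ∀ᶠ z in 𝓝 z₀, (c * F z + d) ^ 2 * deriv G z = K * deriv F z) :
    ∃ a b, a * d - b * c = K ∧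
      ∀ᶠ z in 𝓝 z₀, c * F z + d ≠ 0 ∧ G z = (a * F z + b) / (c * F z + d) := by
  -- the Möbius map with determinant `K` sending `F z₀` to `G z₀`
  set a := K / (c * F z₀ + d) + c * G z₀
  set b := G z₀ * (c * F z₀ + d) - a * F z₀
  have hdet : a * d - b * c = K := by
    simp only [a, b]
    field_simp
    ring
  have hz₀ : (a * F z₀ + b) / (c * F z₀ + d) = G z₀ := by
    rw [show a * F z₀ + b = G z₀ * (c * F z₀ + d) by ring, mul_div_cancel_right₀ _ h₀]
  have hne : ∀ᶠ z in 𝓝 z₀, c * F z + d ≠ 0 :=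
    ((hF.continuousAt.const_mul c).add_const d).eventually_ne h₀
  have hderiv : ∀ᶠ z in 𝓝 z₀,
      HasDerivAt (fun w => G w - (a * F w + b) / (c * F w + d)) 0 z := by
    filter_upwards [hF.eventually_analyticAt, hG.eventually_analyticAt, hne, h]
      with z hFz hGz hnez hz
    refine (hGz.differentiableAt.hasDerivAt.sub
      (hFz.differentiableAt.hasDerivAt.moebius a b hnez)).congr_deriv ?_
    rw [hdet]
    field_simp
    linear_combination hz
  refine ⟨a, b, hdet, ?_⟩
  filter_upwards [hne, eventually_eq_of_eventually_hasDerivAt_zero hderiv] with z hnez hz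
  rw [hz₀, sub_self, sub_eq_zero] at hz
  exact ⟨hnez, hz⟩

theorem exists_eventually_eq_mul_add_of_deriv_deriv_mul_eq {f L : ℂ → ℂ} {z₀ : ℂ}
    (hf : AnalyticAt ℂ f z₀) (hL : AnalyticAt ℂ L z₀) (hf' : deriv f z₀ ≠ 0)
    (h : ∀ᶠ z in 𝓝 z₀, deriv (deriv L) z * deriv f z = deriv L z * deriv (deriv f) z) :
    ∃ c d, ∀ᶠ z in 𝓝 z₀, L z = c * f z + d := by
  have hne := hf.deriv.continuousAt.eventually_ne hf'
  have hratio : ∀ᶠ z in 𝓝 z₀, HasDerivAt (fun w => deriv L w / deriv f w) 0 z := by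
    filter_upwards [hf.eventually_analyticAt, hL.eventually_analyticAt, hne, h]
      with z hfz hLz hf'z hz
    refine (hLz.deriv.differentiableAt.hasDerivAt.div hfz.deriv.differentiableAt.hasDerivAt
      hf'z).congr_deriv ?_
    rw [hz, sub_self, zero_div]
  set c := deriv L z₀ / deriv f z₀
  have hdiff : ∀ᶠ z in 𝓝 z₀, HasDerivAt (fun w => L w - c * f w) 0 z := by
    filter_upwards [hf.eventually_analyticAt, hL.eventually_analyticAt, hne,
      eventually_eq_of_eventually_hasDerivAt_zero hratio] with z hfz hLz hf'z hz
    refine (hLz.differentiableAt.hasDerivAt.sub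
      (hfz.differentiableAt.hasDerivAt.const_mul c)).congr_deriv ?_
    rw [show c = deriv L z / deriv f z from hz.symm, div_mul_cancel₀ _ hf'z, sub_self]
  refine ⟨c, L z₀ - c * f z₀, ?_⟩
  filter_upwards [eventually_eq_of_eventually_hasDerivAt_zero hdiff] with z hz
  linear_combination hz

theorem moebius_on_of_eventually {U : Set ℂ} (hU : IsPreconnected U) {f g : ℂ → ℂ}
    (hf : AnalyticOnNhd ℂ f U) (hg : AnalyticOnNhd ℂ g U) {a b c d : ℂ}
    (hdet : a * d - b * c ≠ 0) {z₀ : ℂ} (hz₀ : z₀ ∈ U)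
    (h : ∀ᶠ z in 𝓝 z₀, c * f z + d ≠ 0 ∧ g z = (a * f z + b) / (c * f z + d)) :
    ∀ z ∈ U, c * f z + d ≠ 0 ∧ g z = (a * f z + b) / (c * f z + d) := by
  have hcross : Set.EqOn (fun z => (c * f z + d) * g z) (fun z => a * f z + b) U := by
    refine AnalyticOnNhd.eqOn_of_preconnected_of_eventuallyEq
      (((analyticOnNhd_const.mul hf).add analyticOnNhd_const).mul hg)
      ((analyticOnNhd_const.mul hf).add analyticOnNhd_const) hU hz₀ ?_
    filter_upwards [h] with z ⟨hne, hz⟩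
    rw [hz, mul_div_cancel₀ _ hne]
  intro z hz
  have hz' : (c * f z + d) * g z = a * f z + b := hcross hz
  have hne : c * f z + d ≠ 0 := by
    intro h0
    apply hdet
    linear_combination (a - c * g z) * h0 + c * hz'
  exact ⟨hne, by rw [eq_div_iff hne]; linear_combination hz'⟩

noncomputable def preSchwarzian (f : ℂ → ℂ) : ℂ → ℂ :=
  fun z => deriv (deriv f) z / deriv f z

theorem schwarzian_eq_deriv_preSchwarzian (f : ℂ → ℂ) (z : ℂ) :
    schwarzian f z = deriv (preSchwarzian f) z - 1 / 2 * preSchwarzian f z ^ 2 :=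
  rfl

section

variable {f g L : ℂ → ℂ} {z K : ℂ}

theorem preSchwarzian_eventuallyEq_of_sq_mul_deriv_eq (hf : AnalyticAt ℂ f z)
    (hg : AnalyticAt ℂ g z) (hL : AnalyticAt ℂ L z) (hf' : deriv f z ≠ 0) (hK : K ≠ 0)
    (h : ∀ᶠ w in 𝓝 z, L w ^ 2 * deriv g w = K * deriv f w) :
    preSchwarzian g =ᶠ[𝓝 z] fun w => preSchwarzian f w - 2 * deriv L w / L w := by
  have hderiv := Filter.EventuallyEq.deriv (f₁ := fun w => L w ^ 2 * deriv g w) h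
  filter_upwards [hf.eventually_analyticAt, hg.eventually_analyticAt, hL.eventually_analyticAt,
    hf.deriv.continuousAt.eventually_ne hf', h, hderiv] with w hfw hgw hLw hf'w hw hdw
  have hLg :=
    (hLw.differentiableAt.hasDerivAt.fun_pow 2).fun_mul hgw.deriv.differentiableAt.hasDerivAt
  rw [hLg.deriv, (hfw.deriv.differentiableAt.hasDerivAt.const_mul K).deriv] at hdw
  have hLw0 : L w ≠ 0 := by
    rintro hL0
    simp [hL0, hK, hf'w] at hw
  have hg'w : deriv g w ≠ 0 := by
    rintro hg0
    simp [hg0, hK, hf'w] at hw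
  simp only [preSchwarzian]
  field_simp
  push_cast at hdw
  refine mul_left_cancel₀ (pow_ne_zero 2 hLw0) ?_
  linear_combination (deriv f w * L w) * hdw - deriv (deriv f) w * L w * hw

theorem schwarzian_eq_add_of_sq_mul_deriv_eq (hf : AnalyticAt ℂ f z)
    (hg : AnalyticAt ℂ g z) (hL : AnalyticAt ℂ L z) (hf' : deriv f z ≠ 0) (hK : K ≠ 0)
    (h : ∀ᶠ w in 𝓝 z, L w ^ 2 * deriv g w = K * deriv f w) :
    schwarzian g z =
      schwarzian f z + 2 * (preSchwarzian f z * deriv L z - deriv (deriv L) z) / L z := by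
  have hP := preSchwarzian_eventuallyEq_of_sq_mul_deriv_eq hf hg hL hf' hK h
  have hLz : L z ≠ 0 := by
    rintro hL0
    simpa [hL0, hK, hf'] using h.self_of_nhds
  have hPf : HasDerivAt (preSchwarzian f) (deriv (preSchwarzian f) z) z :=
    (hf.deriv.deriv.div hf.deriv hf').differentiableAt.hasDerivAt
  have hQ := (hL.deriv.differentiableAt.hasDerivAt.const_mul 2).fun_div
    hL.differentiableAt.hasDerivAt hLz
  rw [schwarzian_eq_deriv_preSchwarzian, schwarzian_eq_deriv_preSchwarzian, hP.deriv_eq,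
    (hPf.fun_sub hQ).deriv, hP.self_of_nhds]
  field_simp
  ring

theorem schwarzian_eq_of_eventually_moebius (hf : AnalyticAt ℂ f z) (hg : AnalyticAt ℂ g z)
    (hf' : deriv f z ≠ 0) {a b c d : ℂ} (hdet : a * d - b * c ≠ 0)
    (h : ∀ᶠ w in 𝓝 z, c * f w + d ≠ 0 ∧ g w = (a * f w + b) / (c * f w + d)) :
    schwarzian g z = schwarzian f z := by
  have hid : ∀ᶠ w in 𝓝 z, (c * f w + d) ^ 2 * deriv g w = (a * d - b * c) * deriv f w := by
    filter_upwards [h.eventually_nhds, hf.eventually_analyticAt] with w hw hfw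
    have hgw : g =ᶠ[𝓝 w] fun y => (a * f y + b) / (c * f y + d) := hw.mono fun _ hy => hy.2
    rw [hgw.deriv_eq, (hfw.differentiableAt.hasDerivAt.moebius a b hw.self_of_nhds.1).deriv]
    field_simp [hw.self_of_nhds.1]
  rw [schwarzian_eq_add_of_sq_mul_deriv_eq hf hg (by fun_prop) hf' hdet hid]
  simp only [preSchwarzian, deriv_add_const', deriv_const_mul_field']
  field_simp
  ring

end

theorem exists_moebius_eventually_of_schwarzian_eq {f g : ℂ → ℂ} {z₀ : ℂ}
    (hf : AnalyticAt ℂ f z₀) (hg : AnalyticAt ℂ g z₀) (hf' : deriv f z₀ ≠ 0)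
    (hg' : deriv g z₀ ≠ 0) (hS : ∀ᶠ z in 𝓝 z₀, schwarzian f z = schwarzian g z) :
    ∃ a b c d : ℂ, a * d - b * c ≠ 0 ∧
      ∀ᶠ z in 𝓝 z₀, c * f z + d ≠ 0 ∧ g z = (a * f z + b) / (c * f z + d) := by
  obtain ⟨L, hL, hL2⟩ :=
    exists_analyticAt_pow_eq (F := fun z => deriv f z / deriv g z) (hf.deriv.div hg.deriv hg')
      (div_ne_zero hf' hg') two_ne_zero
  have hLne : ∀ z, deriv f z ≠ 0 → deriv g z ≠ 0 → L z ≠ 0 := fun z hf'z hg'z hL0 =>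
    div_ne_zero hf'z hg'z (by rw [← hL2, hL0, zero_pow two_ne_zero])
  have hg'ne := hg.deriv.continuousAt.eventually_ne hg'
  have hid : ∀ᶠ z in 𝓝 z₀, L z ^ 2 * deriv g z = 1 * deriv f z := by
    filter_upwards [hg'ne] with z hz
    rw [hL2, div_mul_cancel₀ _ hz, one_mul]
  have hwronski : ∀ᶠ z in 𝓝 z₀,
      deriv (deriv L) z * deriv f z = deriv L z * deriv (deriv f) z := by
    filter_upwards [hf.eventually_analyticAt, hg.eventually_analyticAt, hL.eventually_analyticAt,
      hf.deriv.continuousAt.eventually_ne hf', hg'ne, hid.eventually_nhds, hS]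
      with z hfz hgz hLz hf'z hg'z hidz hSz
    have hcmp := schwarzian_eq_add_of_sq_mul_deriv_eq hfz hgz hLz hf'z one_ne_zero hidz
    rw [← hSz, left_eq_add, div_eq_zero_iff, mul_eq_zero, sub_eq_zero] at hcmp
    simp only [two_ne_zero, hLne z hf'z hg'z, false_or, or_false, preSchwarzian] at hcmp
    field_simp at hcmp
    linear_combination -hcmp
  obtain ⟨c, d, hcd⟩ := exists_eventually_eq_mul_add_of_deriv_deriv_mul_eq hf hL hf' hwronski
  have hcd₀ : c * f z₀ + d ≠ 0 := by
    rw [← hcd.self_of_nhds]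
    exact hLne z₀ hf' hg'
  obtain ⟨a, b, hdet, hmoeb⟩ := exists_moebius_eventually_of_sq_mul_deriv_eq hf hg hcd₀
    (by filter_upwards [hid, hcd] with z hz hLz; rwa [← hLz])
  exact ⟨a, b, c, d, hdet ▸ one_ne_zero, hmoeb⟩

/-- Two holomorphic functions with nonvanishing derivative on a connected open set
have the same Schwarzian derivative iff they differ by a Möbius transformation. -/
theorem schwarzian_eq_iff_moebius_comp (U : Set ℂ) (hU : IsOpen U) (hconn : IsConnected U)
    (f g : ℂ → ℂ) (hf : DifferentiableOn ℂ f U) (hg : DifferentiableOn ℂ g U)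
    (hf' : ∀ z ∈ U, deriv f z ≠ 0) (hg' : ∀ z ∈ U, deriv g z ≠ 0) :
    (∀ z ∈ U, schwarzian f z = schwarzian g z) ↔
      ∃ a b c d : ℂ, a * d - b * c ≠ 0 ∧
        ∀ z ∈ U, c * f z + d ≠ 0 ∧ g z = (a * f z + b) / (c * f z + d) := by
  have hfa : AnalyticOnNhd ℂ f U := hf.analyticOnNhd hU
  have hga : AnalyticOnNhd ℂ g U := hg.analyticOnNhd hU
  constructor
  · intro hS
    obtain ⟨z₀, hz₀⟩ := hconn.nonempty
    obtain ⟨a, b, c, d, hdet, hloc⟩ := exists_moebius_eventually_of_schwarzian_eq (hfa z₀ hz₀)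
      (hga z₀ hz₀) (hf' z₀ hz₀) (hg' z₀ hz₀) (eventually_of_mem (hU.mem_nhds hz₀) hS)
    exact ⟨a, b, c, d, hdet, moebius_on_of_eventually hconn.isPreconnected hfa hga hdet hz₀ hloc⟩
  · rintro ⟨a, b, c, d, hdet, hmoeb⟩ z hz
    exact (schwarzian_eq_of_eventually_moebius (hfa z hz) (hga z hz) (hf' z hz) hdet
      (eventually_of_mem (hU.mem_nhds hz) hmoeb)).symm
end

section
/- If f is holomorphic with f' nonvanishing and S(f) = φ, then setting z₂ = 1/√(f') and z₁ = f/√(f') (for a local branch of the square root), both z₁ and z₂ solve z'' + (φ/2)z = 0 and f = z₁/z₂. -/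
/-!
Everything is local, at a point `v` where `w := 1/g` is analytic and nonzero and `f' = w⁻²`.
Then `f''/f' = -2w'/w`, so `S(f) = -2(w'/w)' - 2(w'/w)² = -2w''/w`, i.e. `w'' + (S(f)/2) w = 0`.
For `z₁ = f w` one has `(f w)' = w⁻¹ + f w'`; differentiating again, the terms `∓ w'/w²`
cancel and `(f w)'' = f w''`, so `z₁` satisfies the same equation.
-/

open Filter Topology

section DerivEqInvSq

variable {f w : ℂ → ℂ} {v : ℂ}

theorem hasDerivAt_of_deriv_eq_inv_sq (hw0 : w v ≠ 0) (hf : deriv f v = (w v ^ 2)⁻¹) :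
    HasDerivAt f (w v ^ 2)⁻¹ v :=
  hf ▸ (differentiableAt_of_deriv_ne_zero (hf ▸ inv_ne_zero (pow_ne_zero 2 hw0))).hasDerivAt

theorem deriv_deriv_of_deriv_eq_inv_sq (hw : DifferentiableAt ℂ w v) (hw0 : w v ≠ 0)
    (hf : deriv f =ᶠ[𝓝 v] fun z => (w z ^ 2)⁻¹) :
    deriv (deriv f) v = -2 * deriv w v / w v ^ 3 := by
  rw [hf.deriv_eq, ((hw.hasDerivAt.fun_pow 2).fun_inv (pow_ne_zero 2 hw0)).deriv]
  field_simp
  ring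

theorem logDeriv_deriv_eventuallyEq_of_deriv_eq_inv_sq (hw : AnalyticAt ℂ w v) (hw0 : w v ≠ 0)
    (hf : deriv f =ᶠ[𝓝 v] fun z => (w z ^ 2)⁻¹) :
    (fun z => deriv (deriv f) z / deriv f z) =ᶠ[𝓝 v] fun z => -2 * deriv w z / w z := by
  filter_upwards [hw.eventually_analyticAt, hw.continuousAt.eventually_ne hw0, hf,
    hf.eventuallyEq_nhds] with z hwz hwz0 hfz hfz'
  rw [deriv_deriv_of_deriv_eq_inv_sq hwz.differentiableAt hwz0 hfz', hfz]
  field_simp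

theorem schwarzian_eq_of_deriv_eq_inv_sq (hw : AnalyticAt ℂ w v) (hw0 : w v ≠ 0)
    (hf : deriv f =ᶠ[𝓝 v] fun z => (w z ^ 2)⁻¹) :
    schwarzian f v = -2 * deriv (deriv w) v / w v := by
  have hL := logDeriv_deriv_eventuallyEq_of_deriv_eq_inv_sq hw hw0 hf
  have hw' : HasDerivAt (deriv w) (deriv (deriv w) v) v :=
    hw.deriv.differentiableAt.hasDerivAt
  rw [schwarzian, hL.deriv_eq, hL.eq_of_nhds,
    ((hw'.const_mul (-2)).fun_div hw.differentiableAt.hasDerivAt hw0).deriv]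
  field_simp
  ring

theorem deriv_deriv_mul_of_deriv_eq_inv_sq (hw : AnalyticAt ℂ w v) (hw0 : w v ≠ 0)
    (hf : deriv f =ᶠ[𝓝 v] fun z => (w z ^ 2)⁻¹) :
    deriv (deriv fun z => f z * w z) v = f v * deriv (deriv w) v := by
  have hprod : (deriv fun z => f z * w z) =ᶠ[𝓝 v] fun z => (w z)⁻¹ + f z * deriv w z := by
    filter_upwards [hw.eventually_analyticAt, hw.continuousAt.eventually_ne hw0, hf]
      with z hwz hwz0 hfz
    rw [((hasDerivAt_of_deriv_eq_inv_sq hwz0 hfz).fun_mul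
      hwz.differentiableAt.hasDerivAt).deriv]
    field_simp
  rw [hprod.deriv_eq, ((hw.differentiableAt.hasDerivAt.fun_inv hw0).fun_add
    ((hasDerivAt_of_deriv_eq_inv_sq hw0 hf.eq_of_nhds).fun_mul
      hw.deriv.differentiableAt.hasDerivAt)).deriv]
  field_simp
  ring

theorem deriv_deriv_add_half_schwarzian_mul_eq_zero (hw : AnalyticAt ℂ w v) (hw0 : w v ≠ 0)
    (hf : deriv f =ᶠ[𝓝 v] fun z => (w z ^ 2)⁻¹) :
    deriv (deriv w) v + schwarzian f v / 2 * w v = 0 := by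
  rw [schwarzian_eq_of_deriv_eq_inv_sq hw hw0 hf]
  field_simp
  ring

theorem deriv_deriv_mul_add_half_schwarzian_mul_eq_zero (hw : AnalyticAt ℂ w v)
    (hw0 : w v ≠ 0) (hf : deriv f =ᶠ[𝓝 v] fun z => (w z ^ 2)⁻¹) :
    deriv (deriv fun z => f z * w z) v + schwarzian f v / 2 * (f v * w v) = 0 := by
  rw [deriv_deriv_mul_of_deriv_eq_inv_sq hw hw0 hf]
  linear_combination f v * deriv_deriv_add_half_schwarzian_mul_eq_zero hw hw0 hf

end DerivEqInvSq

theorem solutions_from_schwarzian_general (U : Set ℂ) (hU : IsOpen U)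
    (f g : ℂ → ℂ) (hf' : ∀ z ∈ U, deriv f z ≠ 0)
    (hg : DifferentiableOn ℂ g U) (hgsq : ∀ z ∈ U, g z ^ 2 = deriv f z) :
    ∀ v ∈ U,
      deriv (deriv (fun z => f z / g z)) v
          + (schwarzian f v / 2) * (f v / g v) = 0 ∧
      deriv (deriv (fun z => 1 / g z)) v
          + (schwarzian f v / 2) * (1 / g v) = 0 ∧
      f v = (f v / g v) / (1 / g v) := by
  intro v hv
  have hg0 : g v ≠ 0 := (pow_ne_zero_iff two_ne_zero).mp (hgsq v hv ▸ hf' v hv)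
  have hw : AnalyticAt ℂ (fun z => 1 / g z) v :=
    analyticAt_const.div (hg.analyticAt (hU.mem_nhds hv)) hg0
  have hf : deriv f =ᶠ[𝓝 v] fun z => ((1 / g z) ^ 2)⁻¹ := by
    filter_upwards [hU.mem_nhds hv] with z hz
    rw [← hgsq z hz, one_div, inv_pow, inv_inv]
  have hz₁ : (fun z => f z / g z) = fun z => f z * (1 / g z) :=
    funext fun z => div_eq_mul_one_div _ _
  refine ⟨?_, deriv_deriv_add_half_schwarzian_mul_eq_zero hw (one_div_ne_zero hg0) hf, ?_⟩
  · rw [hz₁, div_eq_mul_one_div (f v)]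
    exact deriv_deriv_mul_add_half_schwarzian_mul_eq_zero hw (one_div_ne_zero hg0) hf
  · field_simp

/-- If `f` is holomorphic with nonvanishing derivative on a simply connected open set
and `φ = S(f)`, then for a holomorphic branch `g` of `√(f')`, the functions
`z₁ = f/g` and `z₂ = 1/g` solve `z'' + (φ/2)z = 0` and `f = z₁/z₂`. -/
theorem solutions_from_schwarzian (U : Set ℂ) (hU : IsOpen U)
    (hsc : SimplyConnectedSpace U)
    (f g : ℂ → ℂ) (hf : DifferentiableOn ℂ f U) (hf' : ∀ z ∈ U, deriv f z ≠ 0)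
    (hg : DifferentiableOn ℂ g U) (hgsq : ∀ z ∈ U, g z ^ 2 = deriv f z) :
    ∀ v ∈ U,
      deriv (deriv (fun z => f z / g z)) v
          + (schwarzian f v / 2) * (f v / g v) = 0 ∧
      deriv (deriv (fun z => 1 / g z)) v
          + (schwarzian f v / 2) * (1 / g v) = 0 ∧
      f v = (f v / g v) / (1 / g v) :=
  solutions_from_schwarzian_general U hU f g hf' hg hgsq
end
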